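/- arXiv:1504.00878 — 4 statements merged into one kernel-verified Lean document; each statement's English description precedes it below -/
import Mathlib

section
/- Define for k ∈ ℤ the discrete pfaffian element A_{ij}(k) = ((p_i-p_j)/(p_i+p_j)) φ_i^{(0)}(k) φ_j^{(0)}(k). Then A_{ij}(k+1) = A_{ij}(k) + φ_i^{(0)}(k+1) φ_j^{(0)}(k) - φ_i^{(0)}(k) φ_j^{(0)}(k+1). -/
/-- The discrete plane-wave factor `φ^{(n)}(k) = p^n ((1+a p)/(1-a p))^k e^{p⁻¹ s + ξ_0}`. -/
noncomputable def phi (a p x0 : ℝ) (n k : ℤ) (s : ℝ) : ℝ :=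
  p ^ n * ((1 + a * p) / (1 - a * p)) ^ k * Real.exp (p⁻¹ * s + x0)

/-- The discrete pfaffian element `Pf(a_i,a_j)_k = ((p_i-p_j)/(p_i+p_j)) φ_i^{(0)}(k) φ_j^{(0)}(k)`. -/
noncomputable def Adis (a pi pj xi0 xj0 : ℝ) (k : ℤ) (s : ℝ) : ℝ :=
  (pi - pj) / (pi + pj) * phi a pi xi0 0 k s * phi a pj xj0 0 k s

theorem stmt6 (a pi pj xi0 xj0 : ℝ) (hpi : pi ≠ 0) (hpj : pj ≠ 0)
    (hsum : pi + pj ≠ 0)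
    (h1 : a * pi ≠ 1) (h2 : a * pi ≠ -1) (h3 : a * pj ≠ 1) (h4 : a * pj ≠ -1) :
    ∀ (k : ℤ) (s : ℝ),
      Adis a pi pj xi0 xj0 (k+1) s
        = Adis a pi pj xi0 xj0 k s
          + phi a pi xi0 0 (k+1) s * phi a pj xj0 0 k s
          - phi a pi xi0 0 k s * phi a pj xj0 0 (k+1) s := by
  intro k s
  have hi1 : (1 : ℝ) - a * pi ≠ 0 := by intro h; apply h1; linarith
  have hi2 : (1 : ℝ) + a * pi ≠ 0 := by intro h; apply h2; linarith
  have hj1 : (1 : ℝ) - a * pj ≠ 0 := by intro h; apply h3; linarith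
  have hj2 : (1 : ℝ) + a * pj ≠ 0 := by intro h; apply h4; linarith
  have hri : ((1 + a * pi) / (1 - a * pi) : ℝ) ≠ 0 := div_ne_zero hi2 hi1
  have hrj : ((1 + a * pj) / (1 - a * pj) : ℝ) ≠ 0 := div_ne_zero hj2 hj1
  simp only [Adis, phi, zpow_add_one₀ hri, zpow_add_one₀ hrj]
  rw [mul_comm a pi, mul_comm a pj] at *
  field_simp
  ring
end

section
/- With A_{ij}(k) = ((p_i-p_j)/(p_i+p_j)) φ_i^{(0)}(k) φ_j^{(0)}(k) as above, one has (∂_s - a) A_{ij}(k+1) = -a A_{ij}(k) + φ_i^{(0)}(k+1) φ_j^{(-1)}(k) - φ_i^{(-1)}(k) φ_j^{(0)}(k+1). -/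
theorem stmt7 (a pi pj xi0 xj0 : ℝ) (hpi : pi ≠ 0) (hpj : pj ≠ 0)
    (hsum : pi + pj ≠ 0)
    (h1 : a * pi ≠ 1) (h2 : a * pi ≠ -1) (h3 : a * pj ≠ 1) (h4 : a * pj ≠ -1) :
    ∀ (k : ℤ) (s : ℝ),
      deriv (fun s' => Adis a pi pj xi0 xj0 (k+1) s') s - a * Adis a pi pj xi0 xj0 (k+1) s
        = -a * Adis a pi pj xi0 xj0 k s
          + phi a pi xi0 0 (k+1) s * phi a pj xj0 (-1) k s
          - phi a pi xi0 (-1) k s * phi a pj xj0 0 (k+1) s := by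
  intro k s
  have hmi : (1 : ℝ) - a * pi ≠ 0 := by intro h; apply h1; linarith
  have hpi1 : (1 : ℝ) + a * pi ≠ 0 := by intro h; apply h2; linarith
  have hmj : (1 : ℝ) - a * pj ≠ 0 := by intro h; apply h3; linarith
  have hpj1 : (1 : ℝ) + a * pj ≠ 0 := by intro h; apply h4; linarith
  set ri : ℝ := (1 + a * pi) / (1 - a * pi) with hri
  set rj : ℝ := (1 + a * pj) / (1 - a * pj) with hrj
  have hri0 : ri ≠ 0 := div_ne_zero hpi1 hmi
  have hrj0 : rj ≠ 0 := div_ne_zero hpj1 hmj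
  have hEi : HasDerivAt (fun s' : ℝ => Real.exp (pi⁻¹ * s' + xi0))
      (pi⁻¹ * Real.exp (pi⁻¹ * s + xi0)) s := by
    have := (((hasDerivAt_id s).const_mul pi⁻¹).add_const xi0).exp
    simpa [mul_comm] using this
  have hEj : HasDerivAt (fun s' : ℝ => Real.exp (pj⁻¹ * s' + xj0))
      (pj⁻¹ * Real.exp (pj⁻¹ * s + xj0)) s := by
    have := (((hasDerivAt_id s).const_mul pj⁻¹).add_const xj0).exp
    simpa [mul_comm] using this
  have hA : HasDerivAt (fun s' => Adis a pi pj xi0 xj0 (k+1) s')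
      ((pi - pj) / (pi + pj) * (ri ^ (k+1) * rj ^ (k+1)) * (pi⁻¹ + pj⁻¹) *
        (Real.exp (pi⁻¹ * s + xi0) * Real.exp (pj⁻¹ * s + xj0))) s := by
    have h := (hEi.mul hEj).const_mul ((pi - pj) / (pi + pj) * (ri ^ (k+1) * rj ^ (k+1)))
    have hf : (fun s' => Adis a pi pj xi0 xj0 (k+1) s') =
        (fun y => (pi - pj) / (pi + pj) * (ri ^ (k+1) * rj ^ (k+1)) *
          (Real.exp (pi⁻¹ * y + xi0) * Real.exp (pj⁻¹ * y + xj0))) := by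
      funext s'
      simp only [Adis, phi, zpow_zero]
      ring
    rw [hf]
    refine h.congr_deriv ?_
    ring
  rw [hA.deriv]
  simp only [Adis, phi, zpow_zero]
  have hzi : ri ^ (k+1) = ri ^ k * ri := zpow_add_one₀ hri0 k
  have hzj : rj ^ (k+1) = rj ^ k * rj := zpow_add_one₀ hrj0 k
  rw [hzi, hzj, hri, hrj]
  have hpin : (pi : ℝ) ^ (-1 : ℤ) = pi⁻¹ := by simp
  have hpjn : (pj : ℝ) ^ (-1 : ℤ) = pj⁻¹ := by simp
  rw [hpin, hpjn]
  have hmi' : 1 - pi * a ≠ 0 := by rwa [mul_comm]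
  have hmj' : 1 - pj * a ≠ 0 := by rwa [mul_comm]
  field_simp
  ring
end

section
/- The one-soliton solution in parametric form u(y,s) = (2p_{1R}/|p_1|²) e^{i η_{1I}} sech(η_{1R} + η_{10}), x(y,s) = y - (2p_{1R}/|p_1|²)(tanh(η_{1R} + η_{10}) + 1), t = s, with η_{1R} = p_{1R} y + (p_{1R}/|p_1|²)s and η_{1I} = p_{1I} y - (p_{1I}/|p_1|²)s, satisfies the complex short pulse equation u_{xt} = u + (1/2)(|u|² u_x)_x, in the sense that u satisfies ρ u_{sy} = u where ρ⁻¹ = ∂x/∂y = 1 - (2p_{1R}²/|p_1|²) sech²(η_{1R}+η_{10}), together with ∂x/∂s = -(1/2)|u|². -/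
open Complex

/-- `θ(y,s) = η_{1R} + η_{10} = p_{1R} y + (p_{1R}/|p_1|²) s + η_{10}`. -/
noncomputable def theta (p1 : ℂ) (e10 y s : ℝ) : ℝ :=
  p1.re * y + (p1.re / Complex.normSq p1) * s + e10

/-- `χ(y,s) = η_{1I} = p_{1I} y - (p_{1I}/|p_1|²) s`. -/
noncomputable def chi (p1 : ℂ) (y s : ℝ) : ℝ :=
  p1.im * y - (p1.im / Complex.normSq p1) * s

/-- The one-soliton profile `u = (2p_{1R}/|p_1|²) e^{iη_{1I}} sech(η_{1R}+η_{10})`. -/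
noncomputable def uSol (p1 : ℂ) (e10 y s : ℝ) : ℂ :=
  ((2 * p1.re / Complex.normSq p1 : ℝ) : ℂ) * Complex.exp (Complex.I * (chi p1 y s : ℂ))
    * (((Real.cosh (theta p1 e10 y s))⁻¹ : ℝ) : ℂ)

/-- The hodograph coordinate `x = y - (2p_{1R}/|p_1|²)(tanh(η_{1R}+η_{10}) + 1)`. -/
noncomputable def xSol (p1 : ℂ) (e10 y s : ℝ) : ℝ :=
  y - (2 * p1.re / Complex.normSq p1) * (Real.tanh (theta p1 e10 y s) + 1)

lemma theta_hdy (p1 : ℂ) (e10 y s : ℝ) :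
    HasDerivAt (fun y' => theta p1 e10 y' s) p1.re y := by
  simpa [theta] using
    (((hasDerivAt_id y).const_mul p1.re).add_const
      ((p1.re / Complex.normSq p1) * s)).add_const e10

lemma theta_hds (p1 : ℂ) (e10 y s : ℝ) :
    HasDerivAt (fun s' => theta p1 e10 y s') (p1.re / Complex.normSq p1) s := by
  simpa [theta] using
    ((((hasDerivAt_id s).const_mul (p1.re / Complex.normSq p1)).const_add
      (p1.re * y)).add_const e10)

lemma chi_hdy (p1 : ℂ) (y s : ℝ) :
    HasDerivAt (fun y' => chi p1 y' s) p1.im y := by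
  simpa [chi] using
    ((hasDerivAt_id y).const_mul p1.im).sub_const ((p1.im / Complex.normSq p1) * s)

lemma chi_hds (p1 : ℂ) (y s : ℝ) :
    HasDerivAt (fun s' => chi p1 y s') (-(p1.im / Complex.normSq p1)) s := by
  simpa [chi] using
    ((hasDerivAt_id s).const_mul (p1.im / Complex.normSq p1)).const_sub (p1.im * y)

lemma tanh_hd {f : ℝ → ℝ} {f' x : ℝ} (hf : HasDerivAt f f' x) :
    HasDerivAt (fun t => Real.tanh (f t)) (((Real.cosh (f x))⁻¹) ^ 2 * f') x := by
  have h := hf.sinh.fun_div hf.cosh (Real.cosh_pos (f x)).ne'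
  simp only [← Real.tanh_eq_sinh_div_cosh] at h
  refine h.congr_deriv ?_
  symm
  have h2 := Real.cosh_sq_sub_sinh_sq (f x)
  field_simp
  linear_combination (-f') * h2

lemma uSol_hds (p1 : ℂ) (e10 y s : ℝ) :
    HasDerivAt (fun s' => uSol p1 e10 y s')
      ( ((2 * p1.re / Complex.normSq p1 : ℝ) : ℂ)
          * (Complex.exp (Complex.I * (chi p1 y s : ℂ))
              * (Complex.I * ((-(p1.im / Complex.normSq p1) : ℝ) : ℂ)))
          * (((Real.cosh (theta p1 e10 y s))⁻¹ : ℝ) : ℂ)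
        + ((2 * p1.re / Complex.normSq p1 : ℝ) : ℂ)
            * Complex.exp (Complex.I * (chi p1 y s : ℂ))
            * ((-(Real.sinh (theta p1 e10 y s) * (p1.re / Complex.normSq p1))
                / (Real.cosh (theta p1 e10 y s)) ^ 2 : ℝ) : ℂ) ) s := by
  have hexp : HasDerivAt (fun s' => Complex.exp (Complex.I * (chi p1 y s' : ℂ)))
      (Complex.exp (Complex.I * (chi p1 y s : ℂ))
        * (Complex.I * ((-(p1.im / Complex.normSq p1) : ℝ) : ℂ))) s :=
    (((chi_hds p1 y s).ofReal_comp).const_mul Complex.I).cexp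
  have hg : HasDerivAt (fun s' => ((Real.cosh (theta p1 e10 y s'))⁻¹ : ℝ))
      (-(Real.sinh (theta p1 e10 y s) * (p1.re / Complex.normSq p1))
        / (Real.cosh (theta p1 e10 y s)) ^ 2) s :=
    ((theta_hds p1 e10 y s).cosh).inv (Real.cosh_pos _).ne'
  exact
    (hexp.const_mul ((2 * p1.re / Complex.normSq p1 : ℝ) : ℂ)).mul hg.ofReal_comp

lemma alg (a b n E C S i : ℂ) (hn : n ≠ 0) (hC : C ≠ 0)
    (hn2 : n = a^2 + b^2) (h1 : C^2 - S^2 = 1) (hi : i^2 = -1) :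
    2*a/n * (E * (i*b) * (i * -(b/n))) * C⁻¹
      + 2*a/n * (E * (i * -(b/n))) * (-(S*a)/C^2)
      + (2*a/n * (E*(i*b)) * (-(S*(a/n))/C^2)
        + 2*a/n * E * ((-(C*a*(a/n)) * C^2 - -(S*(a/n)) * (2*C^1*(S*a)))/(C^2)^2))
    = (1 - 2*a^2/n * C⁻¹^2) * (2*a/n * E * C⁻¹) := by
  have hD : C * C⁻¹ = 1 := mul_inv_cancel₀ hC
  have hM : n * n⁻¹ = 1 := mul_inv_cancel₀ hn
  linear_combination (-2*a*b^2*n⁻¹^2*E*C⁻¹) * hi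
    + (2*a^3*n⁻¹^2*E*(2*S^2-C^2)*C⁻¹^3 + 2*a^3*n⁻¹^2*E*C⁻¹*(C*C⁻¹+1)) * hD
    + (-4*a^3*n⁻¹^2*E*C⁻¹^3) * h1
    + (2*a*n⁻¹*E*C⁻¹) * hM
    + (-2*a*n⁻¹^2*E*C⁻¹) * hn2

set_option maxHeartbeats 1000000 in
theorem stmt11 (p1 : ℂ) (hp : 0 < p1.re) (hne : |p1.re| ≠ |p1.im|) (e10 : ℝ) :
    (∀ y s : ℝ, deriv (fun y' => xSol p1 e10 y' s) y
        = 1 - (2 * p1.re ^ 2 / Complex.normSq p1)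
            * ((Real.cosh (theta p1 e10 y s))⁻¹) ^ 2) ∧
    (∀ y s : ℝ, deriv (fun s' => xSol p1 e10 y s') s
        = -(1/2) * ‖uSol p1 e10 y s‖ ^ 2) ∧
    (∀ y s : ℝ, deriv (fun y' => deriv (fun s' => uSol p1 e10 y' s') s) y
        = ((1 - (2 * p1.re ^ 2 / Complex.normSq p1)
              * ((Real.cosh (theta p1 e10 y s))⁻¹) ^ 2 : ℝ) : ℂ)
            * uSol p1 e10 y s) := by
  have hp1 : p1 ≠ 0 := by intro h; rw [h] at hp; simp at hp
  have hN : 0 < Complex.normSq p1 := Complex.normSq_pos.mpr hp1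
  have hc : ∀ t : ℝ, Real.cosh t ≠ 0 := fun t => (Real.cosh_pos t).ne'
  refine ⟨fun y s => ?_, fun y s => ?_, fun y s => ?_⟩
  · have h : HasDerivAt (fun y' => xSol p1 e10 y' s)
        (1 - (2 * p1.re / Complex.normSq p1)
          * (((Real.cosh (theta p1 e10 y s))⁻¹) ^ 2 * p1.re)) y := by
      exact (hasDerivAt_id y).sub
        (((tanh_hd (theta_hdy p1 e10 y s)).add_const 1).const_mul
          (2 * p1.re / Complex.normSq p1))
    rw [h.deriv]; ring
  · have h : HasDerivAt (fun s' => xSol p1 e10 y s')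
        (0 - (2 * p1.re / Complex.normSq p1)
          * (((Real.cosh (theta p1 e10 y s))⁻¹) ^ 2 * (p1.re / Complex.normSq p1))) s := by
      exact (hasDerivAt_const s y).sub
        (((tanh_hd (theta_hds p1 e10 y s)).add_const 1).const_mul
          (2 * p1.re / Complex.normSq p1))
    rw [h.deriv]
    have habs : ‖uSol p1 e10 y s‖
        = (2 * p1.re / Complex.normSq p1) * (Real.cosh (theta p1 e10 y s))⁻¹ := by
      rw [uSol]
      rw [norm_mul, norm_mul, Complex.norm_real, Complex.norm_real, Real.norm_eq_abs, Real.norm_eq_abs,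
        Complex.norm_exp]
      rw [abs_of_pos (by positivity), abs_of_pos (by positivity)]
      simp [Complex.mul_re]
    rw [habs]
    field_simp
    ring
  · have hfun : (fun y' => deriv (fun s' => uSol p1 e10 y' s') s)
        = fun y' =>
          ((2 * p1.re / Complex.normSq p1 : ℝ) : ℂ)
            * (Complex.exp (Complex.I * (chi p1 y' s : ℂ))
                * (Complex.I * ((-(p1.im / Complex.normSq p1) : ℝ) : ℂ)))
            * (((Real.cosh (theta p1 e10 y' s))⁻¹ : ℝ) : ℂ)
          + ((2 * p1.re / Complex.normSq p1 : ℝ) : ℂ)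
              * Complex.exp (Complex.I * (chi p1 y' s : ℂ))
              * ((-(Real.sinh (theta p1 e10 y' s) * (p1.re / Complex.normSq p1))
                  / (Real.cosh (theta p1 e10 y' s)) ^ 2 : ℝ) : ℂ) :=
      funext fun y' => (uSol_hds p1 e10 y' s).deriv
    rw [hfun]
    have hE : HasDerivAt (fun y' => Complex.exp (Complex.I * (chi p1 y' s : ℂ)))
        (Complex.exp (Complex.I * (chi p1 y s : ℂ)) * (Complex.I * ((p1.im : ℝ) : ℂ))) y :=
      (((chi_hdy p1 y s).ofReal_comp).const_mul Complex.I).cexp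
    have hG1 : HasDerivAt (fun y' => (Real.cosh (theta p1 e10 y' s))⁻¹)
        (-(Real.sinh (theta p1 e10 y s) * p1.re) / (Real.cosh (theta p1 e10 y s)) ^ 2) y :=
      ((theta_hdy p1 e10 y s).cosh).inv (hc _)
    have hnum : HasDerivAt
        (fun y' => -(Real.sinh (theta p1 e10 y' s) * (p1.re / Complex.normSq p1)))
        (-(Real.cosh (theta p1 e10 y s) * p1.re * (p1.re / Complex.normSq p1))) y :=
      (((theta_hdy p1 e10 y s).sinh).mul_const (p1.re / Complex.normSq p1)).neg
    have hden : HasDerivAt (fun y' => (Real.cosh (theta p1 e10 y' s)) ^ 2)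
        ((2 : ℕ) * (Real.cosh (theta p1 e10 y s)) ^ (2 - 1)
          * (Real.sinh (theta p1 e10 y s) * p1.re)) y :=
      ((theta_hdy p1 e10 y s).cosh).pow 2
    have hG2 := hnum.fun_div hden (pow_ne_zero 2 (hc _))
    have term1 := ((hE.mul_const
        (Complex.I * ((-(p1.im / Complex.normSq p1) : ℝ) : ℂ))).const_mul
          ((2 * p1.re / Complex.normSq p1 : ℝ) : ℂ)).mul hG1.ofReal_comp
    have term2 := (hE.const_mul ((2 * p1.re / Complex.normSq p1 : ℝ) : ℂ)).mul
        hG2.ofReal_comp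
    have total := term1.add term2
    erw [total.deriv]; rw [uSol]
    have hNc : ((Complex.normSq p1 : ℝ) : ℂ) = (p1.re : ℂ)^2 + (p1.im : ℂ)^2 := by
      rw [Complex.normSq_apply]; push_cast; ring
    have h1 : Complex.cosh ((theta p1 e10 y s : ℝ) : ℂ)^2
        - Complex.sinh ((theta p1 e10 y s : ℝ) : ℂ)^2 = 1 := Complex.cosh_sq_sub_sinh_sq _
    have hcC : Complex.cosh ((theta p1 e10 y s : ℝ) : ℂ) ≠ 0 := by
      rw [← Complex.ofReal_cosh]; exact_mod_cast hc _
    have hNC : ((Complex.normSq p1 : ℝ) : ℂ) ≠ 0 := by exact_mod_cast hN.ne'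
    push_cast
    linear_combination alg ((p1.re : ℝ) : ℂ) ((p1.im : ℝ) : ℂ)
      ((Complex.normSq p1 : ℝ) : ℂ)
      (Complex.exp (Complex.I * ((chi p1 y s : ℝ) : ℂ)))
      (Complex.cosh ((theta p1 e10 y s : ℝ) : ℂ))
      (Complex.sinh ((theta p1 e10 y s : ℝ) : ℂ))
      Complex.I hNC hcC hNc h1 Complex.I_sq
end

section
/- Assume positive smooth f and real smooth g_1,...,g_n satisfy the bilinear system D_s D_y f·g_i = f g_i (i = 1,...,n) and D_s² f·f = (1/2) Σ_{j<k} c_{jk} g_j g_k. Then the functions u_i = g_i/f and ρ defined by ρ⁻¹ = 1 - 2(ln f)_{sy} satisfy ρ (u_i)_{sy} = u_i pointwise wherever ρ⁻¹ ≠ 0. -/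
/-- Partial derivative with respect to the first variable (y). -/
noncomputable def pY (f : ℝ → ℝ → ℝ) : ℝ → ℝ → ℝ := fun y s => deriv (fun y' => f y' s) y

/-- Partial derivative with respect to the second variable (s). -/
noncomputable def pS (f : ℝ → ℝ → ℝ) : ℝ → ℝ → ℝ := fun y s => deriv (fun s' => f y s') s

noncomputable def DS (h : ℝ × ℝ → ℝ) : ℝ × ℝ → ℝ := fun p => fderiv ℝ h p (0, 1)
noncomputable def DY (h : ℝ × ℝ → ℝ) : ℝ × ℝ → ℝ := fun p => fderiv ℝ h p (1, 0)

lemma DS_contDiff {h : ℝ × ℝ → ℝ} (hh : ContDiff ℝ (⊤ : ℕ∞) h) : ContDiff ℝ (⊤ : ℕ∞) (DS h) :=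
  (hh.fderiv_right (by simp)).clm_apply contDiff_const

lemma hasDerivAt_S {h : ℝ × ℝ → ℝ} (hh : ContDiff ℝ (⊤ : ℕ∞) h) (y s : ℝ) :
    HasDerivAt (fun s' => h (y, s')) (DS h (y, s)) s := by
  have h1 : HasDerivAt (fun s' : ℝ => ((y, s') : ℝ × ℝ)) ((0 : ℝ), (1 : ℝ)) s := by
    simpa using (hasDerivAt_const s y).prodMk (hasDerivAt_id s)
  exact (hh.differentiable (by simp) (y, s)).hasFDerivAt.comp_hasDerivAt s h1

lemma hasDerivAt_Y {h : ℝ × ℝ → ℝ} (hh : ContDiff ℝ (⊤ : ℕ∞) h) (y s : ℝ) :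
    HasDerivAt (fun y' => h (y', s)) (DY h (y, s)) y := by
  have h1 : HasDerivAt (fun y' : ℝ => ((y', s) : ℝ × ℝ)) ((1 : ℝ), (0 : ℝ)) y := by
    simpa using (hasDerivAt_id y).prodMk (hasDerivAt_const y s)
  exact (hh.differentiable (by simp) (y, s)).hasFDerivAt.comp_hasDerivAt y h1

theorem stmt14 (n : ℕ) (c : Fin n → Fin n → ℝ) (hc : ∀ j k, c j k = c k j)
    (f : ℝ → ℝ → ℝ) (g : Fin n → ℝ → ℝ → ℝ)
    (hf : ContDiff ℝ (⊤ : ℕ∞) fun p : ℝ × ℝ => f p.1 p.2)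
    (hg : ∀ i, ContDiff ℝ (⊤ : ℕ∞) fun p : ℝ × ℝ => g i p.1 p.2)
    (hfpos : ∀ y s, 0 < f y s)
    -- `D_s D_y f·g_i = f g_i`
    (hbl1 : ∀ i y s, pY (pS f) y s * g i y s - pS f y s * pY (g i) y s
        - pY f y s * pS (g i) y s + f y s * pY (pS (g i)) y s = f y s * g i y s)
    -- `D_s² f·f = (1/2) Σ_{j<k} c_{jk} g_j g_k`
    (hbl2 : ∀ y s, 2 * (f y s * pS (pS f) y s - (pS f y s) ^ 2)
        = (1/2) * ∑ j : Fin n, ∑ k : Fin n,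
            if j < k then c j k * g j y s * g k y s else 0) :
    ∀ (i : Fin n) (y s : ℝ),
      1 - 2 * pY (pS (fun y' s' => Real.log (f y' s'))) y s ≠ 0 →
      (1 - 2 * pY (pS (fun y' s' => Real.log (f y' s'))) y s)⁻¹
          * pY (pS (fun y' s' => g i y' s' / f y' s')) y s
        = g i y s / f y s := by
  intro i y s hne
  set F : ℝ × ℝ → ℝ := fun p => f p.1 p.2 with hFdef
  set G : ℝ × ℝ → ℝ := fun p => g i p.1 p.2 with hGdef
  have hG : ContDiff ℝ (⊤ : ℕ∞) G := hg i
  have hane : ∀ a b : ℝ, f a b ≠ 0 := fun a b => (hfpos a b).ne'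
  -- pS of log f
  have hpslog : ∀ a b : ℝ, pS (fun y' s' => Real.log (f y' s')) a b
      = DS F (a, b) / f a b := by
    intro a b
    exact ((hasDerivAt_S hf a b).log (hane a b)).deriv
  -- pY pS of log f
  have hlog : pY (pS (fun y' s' => Real.log (f y' s'))) y s
      = (DY (DS F) (y, s) * f y s - DS F (y, s) * DY F (y, s)) / (f y s) ^ 2 := by
    have h1 : (fun y' => pS (fun y' s' => Real.log (f y' s')) y' s)
        = fun y' => DS F (y', s) / F (y', s) := by
      funext a; exact hpslog a s
    show deriv (fun y' => pS (fun y' s' => Real.log (f y' s')) y' s) y = _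
    rw [h1]
    exact ((hasDerivAt_Y (DS_contDiff hf) y s).div (hasDerivAt_Y hf y s) (hane y s)).deriv
  -- pS of g/f
  have hpsq : ∀ a b : ℝ, pS (fun y' s' => g i y' s' / f y' s') a b
      = (DS G (a, b) * f a b - g i a b * DS F (a, b)) / (f a b) ^ 2 := by
    intro a b
    exact ((hasDerivAt_S hG a b).div (hasDerivAt_S hf a b) (hane a b)).deriv
  -- pY pS of g/f
  have hquot : pY (pS (fun y' s' => g i y' s' / f y' s')) y s
      = ((DY (DS G) (y, s) * f y s + DS G (y, s) * DY F (y, s)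
          - (DY G (y, s) * DS F (y, s) + g i y s * DY (DS F) (y, s))) * (f y s) ^ 2
        - (DS G (y, s) * f y s - g i y s * DS F (y, s))
            * (↑2 * f y s ^ 1 * DY F (y, s))) / ((f y s) ^ 2) ^ 2 := by
    have h1 : (fun y' => pS (fun y' s' => g i y' s' / f y' s') y' s)
        = fun y' => (DS G (y', s) * F (y', s) - G (y', s) * DS F (y', s)) / (F (y', s)) ^ 2 := by
      funext a; exact hpsq a s
    show deriv (fun y' => pS (fun y' s' => g i y' s' / f y' s') y' s) y = _
    rw [h1]
    have hnum : HasDerivAt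
        (fun y' => DS G (y', s) * F (y', s) - G (y', s) * DS F (y', s))
        (DY (DS G) (y, s) * F (y, s) + DS G (y, s) * DY F (y, s)
          - (DY G (y, s) * DS F (y, s) + G (y, s) * DY (DS F) (y, s))) y :=
      ((hasDerivAt_Y (DS_contDiff hG) y s).mul (hasDerivAt_Y hf y s)).sub
        ((hasDerivAt_Y hG y s).mul (hasDerivAt_Y (DS_contDiff hf) y s))
    have hden : HasDerivAt (fun y' => (F (y', s)) ^ 2)
        (↑2 * F (y, s) ^ 1 * DY F (y, s)) y := (hasDerivAt_Y hf y s).pow 2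
    have hd2 : (F (y, s)) ^ 2 ≠ 0 := pow_ne_zero 2 (hane y s)
    exact (hnum.div hden hd2).deriv
  -- translate hbl1
  have e1 : ∀ a b : ℝ, pS f a b = DS F (a, b) := fun a b => (hasDerivAt_S hf a b).deriv
  have e2 : ∀ a b : ℝ, pS (g i) a b = DS G (a, b) := fun a b => (hasDerivAt_S hG a b).deriv
  have e3 : pY f y s = DY F (y, s) := (hasDerivAt_Y hf y s).deriv
  have e4 : pY (g i) y s = DY G (y, s) := (hasDerivAt_Y hG y s).deriv
  have e5 : pY (pS f) y s = DY (DS F) (y, s) := by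
    have h1 : (fun y' => pS f y' s) = fun y' => DS F (y', s) := funext fun a => e1 a s
    show deriv (fun y' => pS f y' s) y = _
    rw [h1]; exact (hasDerivAt_Y (DS_contDiff hf) y s).deriv
  have e6 : pY (pS (g i)) y s = DY (DS G) (y, s) := by
    have h1 : (fun y' => pS (g i) y' s) = fun y' => DS G (y', s) := funext fun a => e2 a s
    show deriv (fun y' => pS (g i) y' s) y = _
    rw [h1]; exact (hasDerivAt_Y (DS_contDiff hG) y s).deriv
  have hbl : DY (DS F) (y, s) * g i y s - DS F (y, s) * DY G (y, s)
      - DY F (y, s) * DS G (y, s) + f y s * DY (DS G) (y, s) = f y s * g i y s := by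
    have := hbl1 i y s
    rw [e1, e2, e3, e4, e5, e6] at this
    exact this
  -- finish
  have ha := hane y s
  have key : pY (pS (fun y' s' => g i y' s' / f y' s')) y s
      = g i y s / f y s
        * (1 - 2 * ((DY (DS F) (y, s) * f y s - DS F (y, s) * DY F (y, s)) / (f y s) ^ 2)) := by
    rw [hquot]
    field_simp
    ring_nf
    linear_combination (f y s) * hbl
  rw [hlog] at hne ⊢
  rw [key, mul_comm (g i y s / f y s), ← mul_assoc, inv_mul_cancel₀ hne, one_mul]
end
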